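/- arXiv:1710.05658 — 5 statements merged into one kernel-verified Lean document; each statement's English description precedes it below -/
import Mathlib

section
/- Let T be a symmetric monoidal category and equip the arrow category of T (equivalently, the category of functors from the walking arrow to T) with the pointwise monoidal structure. If an object f : X₁ ⟶ X₂ of this arrow category is dualizable (i.e., admits a dual object), then the morphism f is an isomorphism in T. -/
open CategoryTheory MonoidalCategory

/-!
Naturality of the unit and counit of a dual pair `F ⊣ G` in a functor category along `φ : i ⟶ j`
says that `(F.map φ, G.map φ)` is a morphism between the pointwise exact pairings. For such a
morphism `(f, g)` the left mate of `g` is a two-sided inverse of `f`: each composite collapses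
to one of the two zigzag identities.
-/

namespace CategoryTheory

section ExactPairingMate

variable {C : Type*} [Category C] [MonoidalCategory C]
  {X X' Y Y' : C} [ExactPairing X X'] [ExactPairing Y Y']

/-- The left adjoint mate of `g`, formed with the given pairings instead of chosen left duals. -/
def ExactPairing.leftMate (g : X' ⟶ Y') : Y ⟶ X :=
  (λ_ _).inv ≫ η_ X X' ▷ Y ≫ (X ◁ g) ▷ Y ≫ (α_ _ _ _).hom ≫ X ◁ ε_ Y Y' ≫ (ρ_ _).hom

theorem ExactPairing.comp_leftMate_of_evaluation {f : X ⟶ Y} {g : X' ⟶ Y'}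
    (hε : (g ⊗ₘ f) ≫ ε_ Y Y' = ε_ X X') : f ≫ leftMate g = 𝟙 X :=
  calc
    _ = 𝟙 _ ⊗≫ (𝟙_ C ◁ f ≫ η_ X X' ▷ Y) ⊗≫ X ◁ g ▷ Y ⊗≫ X ◁ ε_ Y Y' ⊗≫ 𝟙 _ := by
      dsimp only [leftMate]; monoidal
    _ = 𝟙 _ ⊗≫ η_ X X' ▷ X ⊗≫ X ◁ ((g ⊗ₘ f) ≫ ε_ Y Y') ⊗≫ 𝟙 _ := by
      rw [whisker_exchange, tensorHom_def']; monoidal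
    _ = 𝟙 _ ⊗≫ (η_ X X' ▷ X ⊗≫ X ◁ ε_ X X') ⊗≫ 𝟙 _ := by
      rw [hε]; monoidal
    _ = 𝟙 X := by
      rw [evaluation_coevaluation'']; monoidal

theorem ExactPairing.leftMate_comp_of_coevaluation {f : X ⟶ Y} {g : X' ⟶ Y'}
    (hη : η_ X X' ≫ (f ⊗ₘ g) = η_ Y Y') : leftMate g ≫ f = 𝟙 Y :=
  calc
    _ = 𝟙 _ ⊗≫ η_ X X' ▷ Y ⊗≫ (X ◁ g) ▷ Y ⊗≫ (X ◁ ε_ Y Y' ≫ f ▷ 𝟙_ C) ⊗≫ 𝟙 _ := by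
      dsimp only [leftMate]; monoidal
    _ = 𝟙 _ ⊗≫ (η_ X X' ≫ (f ⊗ₘ g)) ▷ Y ⊗≫ Y ◁ ε_ Y Y' ⊗≫ 𝟙 _ := by
      rw [whisker_exchange, tensorHom_def']; monoidal
    _ = 𝟙 _ ⊗≫ (η_ Y Y' ▷ Y ⊗≫ Y ◁ ε_ Y Y') ⊗≫ 𝟙 _ := by
      rw [hη]; monoidal
    _ = 𝟙 Y := by
      rw [evaluation_coevaluation'']; monoidal

theorem ExactPairing.isIso_of_evaluation_of_coevaluation {f : X ⟶ Y} {g : X' ⟶ Y'}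
    (hη : η_ X X' ≫ (f ⊗ₘ g) = η_ Y Y') (hε : (g ⊗ₘ f) ≫ ε_ Y Y' = ε_ X X') : IsIso f :=
  ⟨leftMate g, comp_leftMate_of_evaluation hε, leftMate_comp_of_coevaluation hη⟩

end ExactPairingMate

namespace Functor

variable {J D : Type*} [Category J] [Category D] [MonoidalCategory D]
  (F G : J ⥤ D)

instance exactPairingObj [ExactPairing F G] (j : J) : ExactPairing (F.obj j) (G.obj j) where
  coevaluation' := (η_ F G).app j
  evaluation' := (ε_ F G).app j
  coevaluation_evaluation' :=
    NatTrans.congr_app (ExactPairing.coevaluation_evaluation F G) j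
  evaluation_coevaluation' :=
    NatTrans.congr_app (ExactPairing.evaluation_coevaluation F G) j

theorem coevaluation_obj_comp_tensorHom_map [ExactPairing F G] {i j : J} (φ : i ⟶ j) :
    η_ (F.obj i) (G.obj i) ≫ (F.map φ ⊗ₘ G.map φ) = η_ (F.obj j) (G.obj j) :=
  ((η_ F G).naturality φ).symm.trans (Category.id_comp _)

theorem tensorHom_map_comp_evaluation_obj [ExactPairing F G] {i j : J} (φ : i ⟶ j) :
    (G.map φ ⊗ₘ F.map φ) ≫ ε_ (F.obj j) (G.obj j) = ε_ (F.obj i) (G.obj i) :=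
  ((ε_ F G).naturality φ).trans (Category.comp_id _)

theorem isIso_map_of_exactPairing [ExactPairing F G] {i j : J} (φ : i ⟶ j) : IsIso (F.map φ) :=
  ExactPairing.isIso_of_evaluation_of_coevaluation
    (coevaluation_obj_comp_tensorHom_map F G φ) (tensorHom_map_comp_evaluation_obj F G φ)

end Functor

end CategoryTheory

/-- Let `T` be a symmetric monoidal category and equip the arrow category of
`T` (the category of functors from the walking arrow `Fin 2` to `T`) with the pointwise
monoidal structure.  If an object `F` of this arrow category, corresponding to a morphism
`f : X₁ ⟶ X₂` of `T`, is dualizable, then `f` is an isomorphism in `T`. -/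
theorem dualizable_arrow_isIso {T : Type*} [Category T] [MonoidalCategory T]
    (F : Fin 2 ⥤ T) [HasRightDual F] :
    IsIso (F.map (homOfLE (by decide : (0 : Fin 2) ≤ 1))) :=
  F.isIso_map_of_exactPairing Fᘁ _
end

section
/- Let A be a commutative ring and x ∈ A, and suppose A is derived x-complete as a module over itself. Let M be an A-module which is derived x-complete and such that the quotient M/xM is a finitely generated A-module. Then M is a finitely generated A-module. -/
/-- An `A`-module `M` is *derived `x`-complete* if the derived inverse limit of the tower
`⋯ →(·x) M →(·x) M →(·x) M` of multiplication-by-`x` maps vanishes, i.e. both `lim` and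
`lim¹` of this tower are zero.  Since `lim` and `lim¹` of the tower are respectively the
kernel and the cokernel of the map `∏_{n ∈ ℕ} M → ∏_{n ∈ ℕ} M` sending a sequence `(m_n)`
to `(m_n - x • m_{n+1})`, this is equivalent to that map being bijective. -/
def IsDerivedComplete (A : Type*) [CommRing A] (x : A)
    (M : Type*) [AddCommGroup M] [Module A M] : Prop :=
  Function.Bijective (fun m : ℕ → M => fun n => m n - x • m (n + 1))

/-!
Lift generators of `M/xM` to a finitely generated submodule `N` with `N + xM = M`. Surjectivity
of `(mₙ) ↦ (mₙ - x mₙ₊₁)` on `A` passes to finite free modules and their quotients, so holds on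
`N`; with injectivity on `M`, a diagram chase gives injectivity on `M/N`. But `M/N = x(M/N)`, so
each `q ∈ M/N` starts a chain `q = x q₁, q₁ = x q₂, …` killed by that map; hence `M/N = 0`.
-/

open Function

lemma Submodule.exists_finite_sup_eq_top {A M : Type*} [CommRing A] [AddCommGroup M] [Module A M]
    (P : Submodule A M) [Module.Finite A (M ⧸ P)] :
    ∃ N : Submodule A M, Module.Finite A N ∧ N ⊔ P = ⊤ := by
  obtain ⟨n, f, hf⟩ := Module.Finite.exists_fin' A (M ⧸ P)
  obtain ⟨g, hg⟩ := Module.projective_lifting_property P.mkQ f P.mkQ_surjective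
  refine ⟨LinearMap.range g, inferInstance, ?_⟩
  rw [sup_comm, ← Submodule.map_mkQ_eq_top, ← LinearMap.range_comp, hg,
    LinearMap.range_eq_top.2 hf]

section TowerDiff

variable {A : Type*} [CommRing A] (x : A)

/-- `IsDerivedComplete A x M` unfolds to the bijectivity of `towerDiff x M`. -/
def towerDiff (M : Type*) [AddCommGroup M] [Module A M] : (ℕ → M) →ₗ[A] (ℕ → M) :=
  LinearMap.id - x • LinearMap.funLeft A M Nat.succ

variable {M N : Type*} [AddCommGroup M] [Module A M] [AddCommGroup N] [Module A N]

lemma towerDiff_apply (m : ℕ → M) (n : ℕ) : towerDiff x M m n = m n - x • m (n + 1) := rfl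

lemma towerDiff_comp (f : M →ₗ[A] N) (m : ℕ → M) :
    towerDiff x N (f ∘ m) = f ∘ towerDiff x M m := by
  ext n
  simp [towerDiff_apply]

lemma towerDiff_surjective_pi {ι : Type*} (h : Surjective (towerDiff x A)) :
    Surjective (towerDiff x (ι → A)) := by
  intro c
  choose b hb using fun i => h fun n => c n i
  exact ⟨fun n i => b i n, funext fun n => funext fun i => congrFun (hb i) n⟩

lemma towerDiff_surjective_of_surjective (f : M →ₗ[A] N) (hf : Surjective f)
    (h : Surjective (towerDiff x M)) : Surjective (towerDiff x N) := by
  intro c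
  obtain ⟨b, hb⟩ := h (surjInv hf ∘ c)
  refine ⟨f ∘ b, ?_⟩
  rw [towerDiff_comp, hb, ← comp_assoc, comp_surjInv hf, id_comp]

lemma towerDiff_surjective_of_finite [Module.Finite A M] (h : Surjective (towerDiff x A)) :
    Surjective (towerDiff x M) := by
  obtain ⟨n, f, hf⟩ := Module.Finite.exists_fin' A M
  exact towerDiff_surjective_of_surjective x f hf (towerDiff_surjective_pi x h)

lemma towerDiff_injective_quotient (P : Submodule A M) (hP : Surjective (towerDiff x P))
    (hM : Injective (towerDiff x M)) : Injective (towerDiff x (M ⧸ P)) := by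
  rw [injective_iff_map_eq_zero]
  intro q hq
  set m := surjInv P.mkQ_surjective ∘ q
  have hqm : q = P.mkQ ∘ m := by rw [← comp_assoc, comp_surjInv, id_comp]
  have hmP : ∀ n, towerDiff x M m n ∈ P := fun n => by
    rw [← Submodule.Quotient.mk_eq_zero, ← Submodule.mkQ_apply, ← comp_apply (f := P.mkQ),
      ← towerDiff_comp, ← hqm, hq, Pi.zero_apply]
  obtain ⟨b, hb⟩ := hP fun n => ⟨_, hmP n⟩
  have hmb : m = P.subtype ∘ b := hM <| by
    rw [towerDiff_comp, hb]
    rfl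
  funext n
  simp [hqm, hmb]

lemma subsingleton_of_towerDiff_injective (hx : Surjective fun m : M => x • m)
    (h : Injective (towerDiff x M)) : Subsingleton M := by
  choose y hy using hx
  refine subsingleton_of_forall_eq 0 fun m => ?_
  have hseq : towerDiff x M (fun k => y^[k] m) = 0 := by
    ext k
    rw [towerDiff_apply, iterate_succ_apply', Pi.zero_apply, sub_eq_zero]
    exact (hy _).symm
  exact congrFun ((injective_iff_map_eq_zero _).1 h _ hseq) 0

lemma smul_surjective_quotient_of_sup_eq_top (P : Submodule A M)
    (hP : P ⊔ Ideal.span {x} • ⊤ = ⊤) : Surjective fun q : M ⧸ P => x • q := by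
  intro q
  induction q using Submodule.Quotient.induction_on with | H m => ?_
  obtain ⟨n, hn, _, hxz, rfl⟩ := Submodule.mem_sup.1 (hP ▸ Submodule.mem_top : m ∈ _)
  rw [Submodule.ideal_span_singleton_smul] at hxz
  obtain ⟨z, -, rfl⟩ := hxz
  refine ⟨Submodule.Quotient.mk z, ?_⟩
  simp [(Submodule.Quotient.mk_eq_zero P).2 hn]

end TowerDiff

/-- Let `A` be a commutative ring and `x ∈ A`, and suppose `A` is derived
`x`-complete as a module over itself.  Let `M` be an `A`-module which is derived `x`-complete
and such that `M/xM` is a finitely generated `A`-module.  Then `M` is a finitely generated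
`A`-module. -/
theorem finite_of_derivedComplete_of_finite_quotient {A : Type*} [CommRing A] (x : A)
    (hA : IsDerivedComplete A x A)
    (M : Type*) [AddCommGroup M] [Module A M]
    (hM : IsDerivedComplete A x M)
    (hfg : Module.Finite A (M ⧸ (Ideal.span {x} • (⊤ : Submodule A M)))) :
    Module.Finite A M := by
  obtain ⟨N, hN, hNtop⟩ :=
    Submodule.exists_finite_sup_eq_top (Ideal.span {x} • (⊤ : Submodule A M))
  have hQ : Subsingleton (M ⧸ N) :=
    subsingleton_of_towerDiff_injective x (smul_surjective_quotient_of_sup_eq_top x N hNtop)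
      (towerDiff_injective_quotient x N (towerDiff_surjective_of_finite x hA.2) hM.1)
  obtain rfl : N = ⊤ := Submodule.Quotient.subsingleton_iff.1 hQ
  exact Module.Finite.equiv Submodule.topEquiv
end

section
/- Let A be a commutative ring and x ∈ A. Let M be an A-module which is derived x-complete and satisfies xM = M (i.e., multiplication by x is surjective on M). Then M = 0. -/
/-- Let `A` be a commutative ring and `x ∈ A`.  If `M` is a derived
`x`-complete `A`-module on which multiplication by `x` is surjective (i.e. `xM = M`),
then `M = 0`. -/
theorem eq_zero_of_derivedComplete_of_smul_surjective {A : Type*} [CommRing A] (x : A)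
    (M : Type*) [AddCommGroup M] [Module A M]
    (hM : IsDerivedComplete A x M)
    (hsurj : Function.Surjective (fun m : M => x • m)) :
    ∀ m : M, m = 0 := by
  intro m
  obtain ⟨g, hg⟩ : ∃ g : M → M, ∀ y, x • g y = y :=
    ⟨fun y => (hsurj y).choose, fun y => (hsurj y).choose_spec⟩
  have h0 : (fun n => g^[n] m) = (fun _ => (0 : M)) := by
    apply hM.injective
    funext n
    simp [Function.iterate_succ_apply', hg]
  simpa using congrFun h0 0
end

section
/- Let A be a commutative ring and x ∈ A. If f : M ⟶ N is a homomorphism of A-modules such that both M and N are derived x-complete, then the kernel of f and the cokernel of f are derived x-complete. In particular, the derived x-complete A-modules form an abelian subcategory of the category of A-modules. -/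
/-- The map whose bijectivity defines derived completeness, as a linear map. -/
def derivedCompleteMap (A : Type*) [CommRing A] (x : A)
    (M : Type*) [AddCommGroup M] [Module A M] : (ℕ → M) →ₗ[A] (ℕ → M) where
  toFun m := fun n => m n - x • m (n + 1)
  map_add' a b := by funext n; simp [smul_add]; abel
  map_smul' c m := by funext n; simp [smul_comm x c, smul_sub]

lemma isDerivedComplete_iff (A : Type*) [CommRing A] (x : A)
    (M : Type*) [AddCommGroup M] [Module A M] :
    IsDerivedComplete A x M ↔ Function.Bijective (derivedCompleteMap A x M) :=
  Iff.rfl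

/-- Let `A` be a commutative ring and `x ∈ A`.  If `f : M ⟶ N` is a
homomorphism of `A`-modules such that both `M` and `N` are derived `x`-complete, then the
kernel of `f` and the cokernel of `f` are derived `x`-complete.  (In particular, the derived
`x`-complete `A`-modules form an abelian subcategory of the category of `A`-modules.) -/
theorem derivedComplete_ker_and_coker {A : Type*} [CommRing A] (x : A)
    {M N : Type*} [AddCommGroup M] [Module A M] [AddCommGroup N] [Module A N]
    (f : M →ₗ[A] N)
    (hM : IsDerivedComplete A x M) (hN : IsDerivedComplete A x N) :
    IsDerivedComplete A x (LinearMap.ker f) ∧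
      IsDerivedComplete A x (N ⧸ LinearMap.range f) := by
  constructor
  · constructor
    · -- injectivity on the kernel
      intro a b hab
      have h : (fun n => (a n : M)) = fun n => (b n : M) := by
        apply hM.1
        funext n
        have := congrFun hab n
        simpa using congrArg Subtype.val this
      funext n
      exact Subtype.ext (congrFun h n)
    · -- surjectivity on the kernel
      intro c
      obtain ⟨p, hp⟩ := hM.2 (fun n => (c n : M))
      have hfp : (fun n => f (p n)) = fun n => (0 : N) := by
        apply hN.1
        funext n
        have h1 : p n - x • p (n + 1) = (c n : M) := congrFun hp n
        simp only
        rw [← map_smul, ← map_sub, h1, (c n).2]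
        simp
      refine ⟨fun n => ⟨p n, congrFun hfp n⟩, ?_⟩
      funext n
      exact Subtype.ext (congrFun hp n)
  · rw [isDerivedComplete_iff]
    set R := LinearMap.range f
    constructor
    · -- injectivity on the quotient
      rw [← LinearMap.ker_eq_bot, LinearMap.ker_eq_bot']
      intro a ha
      choose p hp using fun n => Submodule.Quotient.mk_surjective R (a n)
      have hmem : ∀ n, p n - x • p (n + 1) ∈ R := by
        intro n
        rw [← Submodule.Quotient.mk_eq_zero]
        have := congrFun ha n
        simp only [derivedCompleteMap, LinearMap.coe_mk, AddHom.coe_mk] at this ⊢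
        rw [Submodule.Quotient.mk_sub, Submodule.Quotient.mk_smul, hp, hp]
        simpa using this
      choose m hm using hmem
      obtain ⟨u, hu⟩ := hM.2 m
      have hfu : (fun n => f (u n)) = p := by
        apply hN.1
        funext n
        have h1 : u n - x • u (n + 1) = m n := congrFun hu n
        simp only
        rw [← map_smul, ← map_sub, h1, hm]
      funext n
      rw [← hp n, ← congrFun hfu n]
      simp only [Pi.zero_apply, Submodule.Quotient.mk_eq_zero]
      exact ⟨u n, rfl⟩
    · -- surjectivity on the quotient
      intro c
      choose q hq using fun n => Submodule.Quotient.mk_surjective R (c n)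
      obtain ⟨p, hp⟩ := hN.2 q
      refine ⟨fun n => Submodule.Quotient.mk (p n), ?_⟩
      funext n
      have h1 : p n - x • p (n + 1) = q n := congrFun hp n
      simp only [derivedCompleteMap, LinearMap.coe_mk, AddHom.coe_mk]
      rw [← Submodule.Quotient.mk_smul, ← Submodule.Quotient.mk_sub, h1, hq]
end

section
/- Let A be a commutative ring and let I = (x₁, …, x_t) ⊆ A be a finitely generated ideal. If an A-module M is classically I-adically complete (i.e., I-adically separated and complete, M ≅ lim_n M/IⁿM), then M is derived x_i-complete for each i = 1, …, t (i.e., M is derived I-complete). -/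
/-- Let `A` be a commutative ring and `I = (x₁, …, x_t) ⊆ A` a finitely
generated ideal.  If an `A`-module `M` is classically `I`-adically complete (i.e. `I`-adically
separated and complete, `M ≅ lim_n M/IⁿM`), then `M` is derived `x_i`-complete for each
`i = 1, …, t` (i.e. `M` is derived `I`-complete). -/
theorem derivedComplete_of_isAdicComplete {A : Type*} [CommRing A]
    {t : ℕ} (x : Fin t → A)
    (M : Type*) [AddCommGroup M] [Module A M]
    (hM : IsAdicComplete (Ideal.span (Set.range x)) M) :
    ∀ i : Fin t, IsDerivedComplete A (x i) M := by
  intro i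
  set I := Ideal.span (Set.range x) with hI
  have hxI : x i ∈ I := Ideal.subset_span ⟨i, rfl⟩
  have hmem : ∀ (k : ℕ) (c : M), (x i) ^ k • c ∈ (I ^ k • ⊤ : Submodule A M) :=
    fun k c => Submodule.smul_mem_smul (Ideal.pow_mem_pow hxI k) trivial
  constructor
  · -- injectivity
    intro a b hab
    funext n
    rw [← sub_eq_zero]
    have key : ∀ k j : ℕ, a j - b j = (x i) ^ k • (a (j + k) - b (j + k)) := by
      intro k
      induction k with
      | zero => intro j; simp
      | succ k ih =>
        intro j
        have e := congrFun hab j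
        simp only at e
        have e2 : a j - b j = x i • (a (j + 1) - b (j + 1)) := by
          rw [smul_sub]
          exact sub_eq_sub_iff_sub_eq_sub.mp e
        have hjk : j + 1 + k = j + (k + 1) := by omega
        rw [e2, ih (j + 1), hjk, smul_smul, ← pow_succ']
    refine IsHausdorff.haus hM.toIsHausdorff _ fun k => SModEq.zero.mpr ?_
    rw [key k n]
    exact hmem k _
  · -- surjectivity
    intro g
    set F : ℕ → ℕ → M := fun n N => ∑ k ∈ Finset.range N, (x i) ^ k • g (n + k) with hF
    have hcauchy : ∀ n, ∀ {N N' : ℕ}, N ≤ N' →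
        F n N ≡ F n N' [SMOD (I ^ N • ⊤ : Submodule A M)] := by
      intro n N N' h
      rw [SModEq.sub_mem]
      have : F n N' - F n N = ∑ k ∈ Finset.Ico N N', (x i) ^ k • g (n + k) := by
        rw [hF]
        simp [Finset.sum_Ico_eq_sub _ h]
      rw [← neg_sub, this]
      refine neg_mem (Submodule.sum_mem _ fun k hk => ?_)
      have hk' : N ≤ k := (Finset.mem_Ico.mp hk).1
      exact Submodule.smul_mem_smul
        (Ideal.pow_le_pow_right hk' (Ideal.pow_mem_pow hxI k)) trivial
    choose m hm using fun n => IsPrecomplete.prec hM.toIsPrecomplete (hcauchy n)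
    refine ⟨m, funext fun n => ?_⟩
    simp only
    rw [← sub_eq_zero]
    have tele : ∀ N, F n N - x i • F (n + 1) N = g n - (x i) ^ N • g (n + N) := by
      intro N
      induction N with
      | zero => simp [hF]
      | succ N ih =>
        rw [hF] at ih ⊢
        simp only [Finset.sum_range_succ, smul_add, smul_smul, ← pow_succ']
        have h1 : n + 1 + N = n + (N + 1) := by omega
        rw [h1]
        have : (∑ k ∈ Finset.range N, x i ^ k • g (n + k)) + x i ^ N • g (n + N)
            - (x i • ∑ k ∈ Finset.range N, x i ^ k • g (n + 1 + k)
              + x i ^ (N + 1) • g (n + (N + 1)))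
            = ((∑ k ∈ Finset.range N, x i ^ k • g (n + k))
              - x i • ∑ k ∈ Finset.range N, x i ^ k • g (n + 1 + k))
              + x i ^ N • g (n + N) - x i ^ (N + 1) • g (n + (N + 1)) := by abel
        rw [this, ih]
        abel
    refine IsHausdorff.haus hM.toIsHausdorff _ fun N => SModEq.zero.mpr ?_
    have h1 : m n - F n N ∈ (I ^ N • ⊤ : Submodule A M) := by
      have := (hm n N).symm
      rwa [SModEq.sub_mem] at this
    have h2 : x i • (m (n + 1) - F (n + 1) N) ∈ (I ^ N • ⊤ : Submodule A M) := by
      refine Submodule.smul_mem _ _ ?_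
      have := (hm (n + 1) N).symm
      rwa [SModEq.sub_mem] at this
    have h3 : (x i) ^ N • g (n + N) ∈ (I ^ N • ⊤ : Submodule A M) := hmem N _
    have key : m n - x i • m (n + 1) - g n
        = (m n - F n N) - x i • (m (n + 1) - F (n + 1) N) - (x i) ^ N • g (n + N) := by
      rw [smul_sub]
      have := tele N
      have e : F n N - x i • F (n + 1) N - g n = - ((x i) ^ N • g (n + N)) := by
        rw [this]; abel
      calc m n - x i • m (n + 1) - g n
          = (m n - F n N) - (x i • m (n + 1) - x i • F (n + 1) N)
            + (F n N - x i • F (n + 1) N - g n) := by abel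
        _ = _ := by rw [e]; abel
    rw [key]
    exact sub_mem (sub_mem h1 h2) h3
end
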